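/- arXiv:1712.00630 — 7 statements merged into one kernel-verified Lean document; each statement's English description precedes it below -/
import Mathlib

section
/- Let R ⊆ Ω be two bounded d-dimensional convex polytopes in ℝ^d (a bounded convex polytope is a bounded intersection of finitely many closed half-spaces, here assumed to have nonempty interior). Suppose Ω contains a ball of radius r > 0 and Vol(R)/Vol(Ω) ≥ c for some constant c > 0, where Vol denotes d-dimensional Lebesgue measure. Then R contains a ball of radius rc/d. -/
/-!
Let `ρ < r c / d` and suppose that `R` contains no ball of radius `ρ`. Send each point `y` with
`B(y, ρ) ⊆ Ω` to `y + ρ u`, where `u` is the unit normal of a facet inequality of `R` that is most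
violated at `y`. This map lands in `Ω \ R`, is a translation on each piece of a measurable
partition, and is injective because it is the identity plus `ρ` times a monotone map. Its domain
contains the image of `Ω` under the homothety of ratio `1 - ρ / r` centred at the centre of the
inscribed ball, whose volume is `(1 - ρ / r) ^ d Vol Ω ≥ (1 - d ρ / r) Vol Ω`. Hence
`Vol R ≤ (d ρ / r) Vol Ω < c Vol Ω`, a contradiction; by compactness the inradius of `R` is
attained, so `R` contains a ball of radius `r c / d` itself.
-/

open MeasureTheory

/-- A bounded convex polytope in `ℝ^d`: a bounded intersection of finitely many closed
half-spaces. -/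
def IsBoundedConvexPolytope {d : ℕ} (P : Set (EuclideanSpace ℝ (Fin d))) : Prop :=
  Bornology.IsBounded P ∧
    ∃ (m : ℕ) (a : Fin m → EuclideanSpace ℝ (Fin d)) (b : Fin m → ℝ),
      P = {x | ∀ i, inner ℝ (a i) x ≤ b i}

open Metric Set Module Function RealInnerProductSpace
open scoped Pointwise

section Polyhedron

variable {E : Type*} [NormedAddCommGroup E] [InnerProductSpace ℝ E]

def polyhedron {ι : Type*} (a : ι → E) (b : ι → ℝ) : Set E := {x | ∀ i, ⟪a i, x⟫ ≤ b i}

variable {ι : Type*}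

theorem isClosed_polyhedron (a : ι → E) (b : ι → ℝ) : IsClosed (polyhedron a b) := by
  simp only [polyhedron, ofPred_forall]
  exact isClosed_iInter fun i => isClosed_le (continuous_const.inner continuous_id) continuous_const

theorem convex_polyhedron (a : ι → E) (b : ι → ℝ) : Convex ℝ (polyhedron a b) := by
  simp only [polyhedron, ofPred_forall]
  exact convex_iInter fun i => convex_halfSpace_le (innerₛₗ ℝ (a i)).isLinear (b i)

theorem polyhedron_eq_normalize {a : ι → E} {b : ι → ℝ} (h : (polyhedron a b).Nonempty) :
    polyhedron a b =
      polyhedron (fun i : {i // a i ≠ 0} => ‖a i‖⁻¹ • a i) (fun i => b i / ‖a i‖) := by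
  obtain ⟨x₀, hx₀⟩ := h
  ext x
  simp only [polyhedron, mem_ofPred_eq, real_inner_smul_left, inv_mul_eq_div, Subtype.forall]
  constructor
  · exact fun hx i _ => div_le_div_of_nonneg_right (hx i) (norm_nonneg _)
  · intro hx i
    by_cases hi : a i = 0
    · simpa [hi] using hx₀ i
    · exact (div_le_div_iff_of_pos_right (norm_pos_iff.2 hi)).1 (hx i hi)

theorem closedBall_subset_polyhedron {u : ι → E} (hu : ∀ i, ‖u i‖ ≤ 1) {β : ι → ℝ}
    {y : E} {ρ : ℝ} (h : ∀ i, ⟪u i, y⟫ + ρ ≤ β i) : closedBall y ρ ⊆ polyhedron u β := by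
  intro x hx i
  have hxy : ‖x - y‖ ≤ ρ := mem_closedBall_iff_norm.1 hx
  calc ⟪u i, x⟫ = ⟪u i, y⟫ + ⟪u i, x - y⟫ := by rw [inner_sub_right]; ring
    _ ≤ ⟪u i, y⟫ + ‖u i‖ * ‖x - y‖ := by gcongr; exact real_inner_le_norm _ _
    _ ≤ ⟪u i, y⟫ + 1 * ρ := by gcongr; exact hu i
    _ ≤ β i := by simpa using h i

end Polyhedron

theorem MeasurableSet.disjointed_of_locallyFiniteOrderBot {α ι : Type*} [MeasurableSpace α]
    [Preorder ι] [LocallyFiniteOrderBot ι] {f : ι → Set α} (hf : ∀ i, MeasurableSet (f i))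
    (i : ι) : MeasurableSet (disjointed f i) := by
  rw [disjointed_apply, Finset.sup_set_eq_biUnion]
  exact (hf i).diff (Finset.measurableSet_biUnion _ fun j _ => hf j)

theorem measure_iUnion_le_of_vadd_subset {G α ι : Type*} [AddGroup G] [AddAction G α]
    [MeasurableSpace α] [MeasurableConstVAdd G α] [Countable ι] (μ : Measure α)
    [VAddInvariantMeasure G α μ] {D : ι → Set α} (hD : ∀ i, MeasurableSet (D i))
    (hD_disj : Pairwise (Disjoint on D)) (g : ι → G)
    (hT_disj : Pairwise (Disjoint on fun i => g i +ᵥ D i)) {U : Set α}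
    (hU : ∀ i, g i +ᵥ D i ⊆ U) : μ (⋃ i, D i) ≤ μ U :=
  calc μ (⋃ i, D i) = ∑' i, μ (g i +ᵥ D i) := by
        simp only [measure_iUnion hD_disj hD, measure_vadd]
    _ = μ (⋃ i, g i +ᵥ D i) := (measure_iUnion hT_disj fun i => (hD i).const_vadd _).symm
    _ ≤ μ U := measure_mono (iUnion_subset hU)

section Erosion

variable {E : Type*} [NormedAddCommGroup E] [InnerProductSpace ℝ E]

theorem eq_of_add_smul_eq_add_smul {u v y z : E} {a b ρ : ℝ} (hρ : 0 < ρ)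
    (hy : ⟪v, y⟫ - b ≤ ⟪u, y⟫ - a) (hz : ⟪u, z⟫ - a ≤ ⟪v, z⟫ - b)
    (h : ρ • u + y = ρ • v + z) : y = z := by
  have hyz : y - z = ρ • (v - u) := by
    rw [smul_sub, sub_eq_sub_iff_add_eq_add, add_comm, h, add_comm]
  have hmono : ⟪v - u, y - z⟫ ≤ 0 := by
    simp only [inner_sub_left, inner_sub_right]; linarith
  rw [hyz, real_inner_smul_right] at hmono
  have huv : v - u = 0 := real_inner_self_nonpos.1 (nonpos_of_mul_nonpos_right hmono hρ)
  rwa [huv, smul_zero, sub_eq_zero] at hyz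

variable [MeasurableSpace E] [BorelSpace E]

theorem measure_le_measure_diff_polyhedron {ι : Type*} [Finite ι] [LinearOrder ι]
    [LocallyFiniteOrderBot ι] (μ : Measure E) [μ.IsAddLeftInvariant] {u : ι → E}
    (hu : ∀ i, ‖u i‖ = 1) {β : ι → ℝ} {ρ : ℝ} (hρ : 0 < ρ)
    (hR : ∀ y, ¬ closedBall y ρ ⊆ polyhedron u β) {S Ω : Set E} (hS : MeasurableSet S)
    (hSΩ : ∀ y ∈ S, closedBall y ρ ⊆ Ω) :
    μ S ≤ μ (Ω \ polyhedron u β) := by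
  have hviol (y : E) : ∃ i, β i < ⟪u i, y⟫ + ρ := by
    by_contra! h
    exact hR y (closedBall_subset_polyhedron (fun i => (hu i).le) h)
  have : Nonempty ι := ⟨(hviol 0).choose⟩
  let A (i : ι) : Set E := S ∩ {y | ∀ j, ⟪u j, y⟫ - β j ≤ ⟪u i, y⟫ - β i}
  have hA (i : ι) : MeasurableSet (A i) := by
    refine hS.inter ?_
    simp only [ofPred_forall]
    refine MeasurableSet.iInter fun j => measurableSet_le ?_ ?_ <;> fun_prop
  have hSA : S = ⋃ i, disjointed A i := by
    refine (iUnion_disjointed (f := A)).symm ▸ subset_antisymm (fun y hy => ?_)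
      (iUnion_subset fun i => inter_subset_left)
    obtain ⟨i, hi⟩ := Finite.exists_max fun i => ⟪u i, y⟫ - β i
    exact mem_iUnion.2 ⟨i, hy, hi⟩
  rw [hSA]
  refine measure_iUnion_le_of_vadd_subset μ
    (MeasurableSet.disjointed_of_locallyFiniteOrderBot hA) (disjoint_disjointed A)
    (fun i => ρ • u i) (fun i j hij => Set.disjoint_left.2 ?_) fun i => ?_
  · rintro _ ⟨y, hy, rfl⟩ ⟨z, hz, hzy⟩
    have hyz : y = z := eq_of_add_smul_eq_add_smul hρ ((disjointed_subset A i hy).2 j)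
      ((disjointed_subset A j hz).2 i) hzy.symm
    exact Set.disjoint_left.1 (disjoint_disjointed A hij) hy (hyz ▸ hz)
  · rintro _ ⟨y, hy, rfl⟩
    dsimp only [vadd_eq_add]
    obtain ⟨hyS, hmax⟩ := disjointed_subset A i hy
    refine ⟨hSΩ y hyS ?_, fun hmem => ?_⟩
    · rw [mem_closedBall_iff_norm, add_sub_cancel_right, norm_smul, hu i,
        Real.norm_of_nonneg hρ.le, mul_one]
    · obtain ⟨j, hj⟩ := hviol y
      have := hmem i
      rw [inner_add_right, real_inner_smul_right, real_inner_self_eq_norm_sq, hu i] at this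
      linarith [hmax j]

end Erosion

section Inradius

variable {E : Type*} [NormedAddCommGroup E] [NormedSpace ℝ E]

/-- A maximizer of the distance to the complement is the center of a largest ball. -/
theorem IsCompact.exists_closedBall_subset_of_forall_mem_Ioo {K : Set E} (hK : IsCompact K)
    {ρ₀ : ℝ} (hρ₀ : 0 < ρ₀) (h : ∀ ρ ∈ Ioo 0 ρ₀, ∃ y, closedBall y ρ ⊆ K) :
    ∃ y, closedBall y ρ₀ ⊆ K := by
  rcases Kᶜ.eq_empty_or_nonempty with hKc | hKc
  · exact ⟨0, by simp [compl_empty_iff.1 hKc]⟩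
  have hKne : K.Nonempty := by
    obtain ⟨y, hy⟩ := h (ρ₀ / 2) ⟨by positivity, by linarith⟩
    exact ⟨y, hy (mem_closedBall_self (by positivity))⟩
  obtain ⟨y₀, -, hmax⟩ := hK.exists_isMaxOn hKne (continuous_infDist_pt Kᶜ).continuousOn
  have hρ₀_le : ρ₀ ≤ infDist y₀ Kᶜ := by
    refine le_of_forall_lt_imp_le_of_dense fun ρ hρ => ?_
    rcases le_or_gt ρ 0 with hρ0 | hρ0
    · exact hρ0.trans (infDist_nonneg (x := y₀))
    obtain ⟨y, hy⟩ := h ρ ⟨hρ0, hρ⟩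
    have hρy : ρ ≤ infDist y Kᶜ := (le_infDist hKc).2 fun z hz =>
      le_of_not_gt fun hlt => hz (hy (mem_closedBall'.2 hlt.le))
    exact hρy.trans (hmax (hy (mem_closedBall_self hρ0.le)))
  refine ⟨y₀, ?_⟩
  calc closedBall y₀ ρ₀ = closure (ball y₀ ρ₀) := (closure_ball y₀ hρ₀.ne').symm
    _ ⊆ closure Kᶜᶜ := closure_mono ((ball_subset_ball hρ₀_le).trans ball_infDist_subset_compl)
    _ = K := by rw [compl_compl, hK.isClosed.closure_eq]

end Inradius

section Homothety

variable {E : Type*} [NormedAddCommGroup E] [NormedSpace ℝ E]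

theorem closedBall_homothety_subset {Ω : Set E} (hΩ : Convex ℝ Ω) {x₀ : E} {r : ℝ}
    (hball : closedBall x₀ r ⊆ Ω) {s : ℝ} (hs₀ : 0 < s) (hs₁ : s ≤ 1) {w : E} (hw : w ∈ Ω) :
    closedBall (AffineMap.homothety x₀ (1 - s) w) (s * r) ⊆ Ω := by
  intro z hz
  set q := x₀ + s⁻¹ • (z - AffineMap.homothety x₀ (1 - s) w)
  have hq : q ∈ closedBall x₀ r := by
    rw [mem_closedBall_iff_norm, add_sub_cancel_left, norm_smul, Real.norm_of_nonneg
      (inv_nonneg.2 hs₀.le), inv_mul_le_iff₀ hs₀]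
    exact mem_closedBall_iff_norm.1 hz
  have hz : z = (1 - s) • w + s • q := by
    simp only [q, AffineMap.homothety_apply, vsub_eq_sub, vadd_eq_add, smul_add,
      smul_inv_smul₀ hs₀.ne']
    module
  exact hz ▸ hΩ hw (hball hq) (by linarith) hs₀.le (by ring)

end Homothety

section VolumeBound

variable {E : Type*} [NormedAddCommGroup E] [InnerProductSpace ℝ E] [FiniteDimensional ℝ E]
  [MeasurableSpace E] [BorelSpace E]

theorem toReal_measure_polyhedron_le (μ : Measure E) [μ.IsAddHaarMeasure] {ι : Type*} [Finite ι]
    [LinearOrder ι] [LocallyFiniteOrderBot ι] {a : ι → E} {b : ι → ℝ} {Ω : Set E}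
    (hΩ : Convex ℝ Ω) (hΩc : IsCompact Ω) (hsub : polyhedron a b ⊆ Ω) {x₀ : E} {r : ℝ}
    (hr : 0 < r) (hball : closedBall x₀ r ⊆ Ω) {ρ : ℝ} (hρ : 0 < ρ) (hρr : ρ ≤ r)
    (hR : ∀ y, ¬ closedBall y ρ ⊆ polyhedron a b) :
    (μ (polyhedron a b)).toReal ≤ finrank ℝ E * (ρ / r) * (μ Ω).toReal := by
  classical
  rcases (polyhedron a b).eq_empty_or_nonempty with hR₀ | hRne
  · rw [hR₀, measure_empty, ENNReal.toReal_zero]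
    positivity
  set t := 1 - ρ / r
  have ht : 0 ≤ t := sub_nonneg.2 (div_le_one_of_le₀ hρr hr.le)
  have hS : MeasurableSet (AffineMap.homothety x₀ t '' Ω) :=
    (hΩc.image (AffineMap.homothety_continuous x₀ t)).isClosed.measurableSet
  have hSΩ : ∀ y ∈ AffineMap.homothety x₀ t '' Ω, closedBall y ρ ⊆ Ω := by
    rintro _ ⟨w, hw, rfl⟩
    simpa [div_mul_cancel₀ ρ hr.ne'] using closedBall_homothety_subset hΩ hball
      (div_pos hρ hr) (div_le_one_of_le₀ hρr hr.le) hw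
  have hSR : μ (AffineMap.homothety x₀ t '' Ω) ≤ μ (Ω \ polyhedron a b) := by
    rw [polyhedron_eq_normalize hRne] at hR ⊢
    exact measure_le_measure_diff_polyhedron μ (fun i => norm_smul_inv_norm i.2) hρ hR hS hSΩ
  rw [Measure.addHaar_image_homothety,
    abs_of_nonneg (pow_nonneg ht _), measure_sdiff hsub
      (isClosed_polyhedron a b).measurableSet.nullMeasurableSet
      (measure_ne_top_of_subset hsub hΩc.measure_lt_top.ne)] at hSR
  have hreal := ENNReal.toReal_mono (ENNReal.sub_ne_top hΩc.measure_lt_top.ne) hSR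
  rw [ENNReal.toReal_mul, ENNReal.toReal_ofReal (pow_nonneg ht _),
    ENNReal.toReal_sub_of_le (measure_mono hsub) hΩc.measure_lt_top.ne] at hreal
  have hbernoulli : 1 - finrank ℝ E * (ρ / r) ≤ t ^ finrank ℝ E := by
    simpa [t, sub_eq_add_neg] using one_add_mul_le_pow (a := -(ρ / r)) (by linarith) (finrank ℝ E)
  nlinarith [mul_le_mul_of_nonneg_right hbernoulli (μ Ω).toReal_nonneg]

end VolumeBound

/-- **Lemma (p33).** Let `R ⊆ Ω` be bounded `d`-dimensional convex polytopes in `ℝ^d`.  If `Ω`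
contains a ball of radius `r > 0` and `Vol(R)/Vol(Ω) ≥ c > 0`, then `R` contains a ball of
radius `rc/d`. -/
theorem stmt_8 {d : ℕ} (R Ω : Set (EuclideanSpace ℝ (Fin d)))
    (hR : IsBoundedConvexPolytope R) (hΩ : IsBoundedConvexPolytope Ω)
    (hRint : (interior R).Nonempty) (hΩint : (interior Ω).Nonempty)
    (hsub : R ⊆ Ω)
    {r : ℝ} (hr : 0 < r) (x₀ : EuclideanSpace ℝ (Fin d))
    (hball : Metric.closedBall x₀ r ⊆ Ω)
    {c : ℝ} (hc : 0 < c)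
    (hvol : c ≤ (volume R).toReal / (volume Ω).toReal) :
    ∃ y : EuclideanSpace ℝ (Fin d), Metric.closedBall y (r * c / d) ⊆ R := by
  obtain ⟨hRbd, _, a, b, (rfl : R = polyhedron a b)⟩ := hR
  obtain ⟨hΩbd, _, aΩ, bΩ, (rfl : Ω = polyhedron aΩ bΩ)⟩ := hΩ
  have hRc := isCompact_of_isClosed_isBounded (isClosed_polyhedron a b) hRbd
  have hΩc := isCompact_of_isClosed_isBounded (isClosed_polyhedron aΩ bΩ) hΩbd
  rcases d.eq_zero_or_pos with rfl | hd
  · obtain ⟨y, hy⟩ := hRint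
    exact ⟨y, by simpa using interior_subset hy⟩
  have hΩpos : 0 < (volume (polyhedron aΩ bΩ)).toReal :=
    ENNReal.toReal_pos (Measure.measure_pos_of_nonempty_interior _ hΩint).ne'
      hΩc.measure_lt_top.ne
  rw [le_div_iff₀ hΩpos] at hvol
  have hc₁ : c ≤ 1 := by
    nlinarith [ENNReal.toReal_mono (hΩc.measure_lt_top (μ := volume)).ne (measure_mono hsub)]
  by_contra! hno
  obtain ⟨ρ, ⟨hρ, hρlt⟩, hρR⟩ :
      ∃ ρ ∈ Ioo 0 (r * c / d), ∀ y, ¬ closedBall y ρ ⊆ polyhedron a b := by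
    by_contra! h
    obtain ⟨y, hy⟩ := hRc.exists_closedBall_subset_of_forall_mem_Ioo (by positivity) h
    exact hno y hy
  have hd₁ : (1 : ℝ) ≤ d := Nat.one_le_cast.2 hd
  rw [lt_div_iff₀ (by positivity)] at hρlt
  have key := toReal_measure_polyhedron_le volume (convex_polyhedron aΩ bΩ) hΩc hsub hr hball hρ
    (by nlinarith) hρR
  rw [finrank_euclideanSpace_fin] at key
  have hcρ : c ≤ d * (ρ / r) := le_of_mul_le_mul_right (hvol.trans key) hΩpos
  rw [← mul_div_assoc, le_div_iff₀ hr] at hcρ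
  linarith
end

section
/- Let Ω be a bounded convex subset of ℝ^d that contains a ball of radius r > 0, and for ε > 0 let Ω_ε = {t ∈ ℝ^d : inf_{s ∈ Ω} ‖t − s‖ ≤ ε} be the closed ε-neighborhood of Ω. Then Vol(Ω_ε)/Vol(Ω) ≤ (1 + ε/r)^d, where Vol denotes d-dimensional Lebesgue measure. -/
open MeasureTheory

/-- **Lemma (p34).** Let `Ω` be a bounded convex subset of `ℝ^d` containing a ball of radius
`r > 0`, and let `Ω_ε` be the closed `ε`-neighborhood of `Ω`.  Then
`Vol(Ω_ε)/Vol(Ω) ≤ (1 + ε/r)^d`. -/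
theorem stmt_9 {d : ℕ} (Ω : Set (EuclideanSpace ℝ (Fin d)))
    (hconv : Convex ℝ Ω) (hbdd : Bornology.IsBounded Ω)
    {r : ℝ} (hr : 0 < r) (c : EuclideanSpace ℝ (Fin d))
    (hball : Metric.closedBall c r ⊆ Ω)
    {ε : ℝ} (hε : 0 < ε) :
    (volume {t : EuclideanSpace ℝ (Fin d) | Metric.infDist t Ω ≤ ε}).toReal /
        (volume Ω).toReal ≤ (1 + ε / r) ^ d := by
  set lam : ℝ := 1 + ε / r with hlam_def
  have hlam1 : 1 < lam := by
    rw [hlam_def]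
    have : 0 < ε / r := div_pos hε hr
    linarith
  have hlam0 : 0 < lam := by linarith
  have hne : Ω.Nonempty := ⟨c, hball (Metric.mem_closedBall_self hr.le)⟩
  -- key inclusion
  have hsub : {t : EuclideanSpace ℝ (Fin d) | Metric.infDist t Ω ≤ ε} ⊆
      AffineMap.homothety c lam '' closure Ω := by
    intro t ht
    simp only [Set.mem_setOf_eq] at ht
    obtain ⟨s, hs, hds⟩ := hbdd.isCompact_closure.exists_infDist_eq_dist
      hne.closure t
    rw [Metric.infDist_closure] at hds
    have hdist : dist t s ≤ ε := by rw [← hds]; exact ht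
    set v : EuclideanSpace ℝ (Fin d) := t - s with hv
    have hvnorm : ‖v‖ ≤ ε := by rwa [← dist_eq_norm]
    have hc' : c + (r / ε) • v ∈ closure Ω := by
      apply subset_closure
      apply hball
      rw [Metric.mem_closedBall, dist_eq_norm]
      have : ‖c + (r / ε) • v - c‖ = (r / ε) * ‖v‖ := by
        simp [norm_smul, abs_of_pos hr, abs_of_pos hε]
      rw [this]
      calc (r / ε) * ‖v‖ ≤ (r / ε) * ε := by
            exact mul_le_mul_of_nonneg_left hvnorm (div_pos hr hε).le
        _ = r := by field_simp
    set p : EuclideanSpace ℝ (Fin d) :=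
      (1 - 1 / lam) • (c + (r / ε) • v) + (1 / lam) • s with hp
    have hpmem : p ∈ closure Ω := by
      have ha : (0:ℝ) ≤ 1 - 1 / lam := by
        have : 1 / lam ≤ 1 := by rw [div_le_one hlam0]; linarith
        linarith
      have hb : (0:ℝ) ≤ 1 / lam := by positivity
      exact hconv.closure hc' hs ha hb (by ring)
    refine ⟨p, hpmem, ?_⟩
    show lam • (p -ᵥ c) +ᵥ c = t
    have hεne : (ε : ℝ) ≠ 0 := hε.ne'
    have hrne : (r : ℝ) ≠ 0 := hr.ne'
    have hlamne : lam ≠ 0 := hlam0.ne'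
    have ht' : t = s + v := by simp [hv]
    rw [ht']
    simp only [vsub_eq_sub, vadd_eq_add, hp]
    match_scalars <;> (simp only [hlam_def]; field_simp; ring)
  -- measure comparisons
  have hclos : volume (closure Ω) ≤ volume Ω := by
    calc volume (closure Ω) = volume (Ω ∪ frontier Ω) := by
          rw [closure_eq_self_union_frontier]
      _ ≤ volume Ω + volume (frontier Ω) := measure_union_le _ _
      _ = volume Ω := by rw [hconv.addHaar_frontier volume, add_zero]
  have hvol : volume {t : EuclideanSpace ℝ (Fin d) | Metric.infDist t Ω ≤ ε}
      ≤ ENNReal.ofReal (lam ^ d) * volume Ω := by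
    calc volume {t : EuclideanSpace ℝ (Fin d) | Metric.infDist t Ω ≤ ε}
        ≤ volume (AffineMap.homothety c lam '' closure Ω) := measure_mono hsub
      _ = ENNReal.ofReal |lam ^ Module.finrank ℝ (EuclideanSpace ℝ (Fin d))| *
            volume (closure Ω) := Measure.addHaar_image_homothety _ _ _ _
      _ = ENNReal.ofReal (lam ^ d) * volume (closure Ω) := by
            rw [finrank_euclideanSpace_fin, abs_of_pos (pow_pos hlam0 d)]
      _ ≤ ENNReal.ofReal (lam ^ d) * volume Ω := by
            exact mul_le_mul_right hclos _
  have hΩfin : volume Ω ≠ ⊤ := hbdd.measure_lt_top.ne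
  have hΩpos : 0 < volume Ω :=
    lt_of_lt_of_le (Metric.measure_closedBall_pos volume c hr) (measure_mono hball)
  have hΩpos' : 0 < (volume Ω).toReal :=
    ENNReal.toReal_pos hΩpos.ne' hΩfin
  rw [div_le_iff₀ hΩpos']
  have h2 := ENNReal.toReal_mono
    (by exact ENNReal.mul_ne_top ENNReal.ofReal_ne_top hΩfin) hvol
  rwa [ENNReal.toReal_mul, ENNReal.toReal_ofReal (pow_pos hlam0 d).le] at h2
end

section
/- Let {g_k} be a sequence in the group N of n×n real upper triangular unipotent matrices, g_k = (u_{ij}(k)), satisfying the dichotomy condition: for each pair (i,j) with 1 ≤ i < j ≤ n, either u_{ij}(k) = 0 for every k, or |u_{ij}(k)| → ∞ as k → ∞. Let a be a diagonal matrix in SL(n,ℝ) with positive diagonal entries. If the sequence {g_k · a · g_k⁻¹} is bounded in SL(n,ℝ), then g_k commutes with a for every k. -/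
open Filter Topology

attribute [local instance] Matrix.frobeniusNormedAddCommGroup

/-- `u` is an upper triangular unipotent matrix. -/
def IsUpperUnip {n : ℕ} (u : Matrix (Fin n) (Fin n) ℝ) : Prop :=
  (∀ i : Fin n, u i i = 1) ∧ ∀ i j : Fin n, j < i → u i j = 0

/-!
Write `a = diagonal d` and `D_k = g_k a - a g_k`, so that `D_k i j = g_k i j * (d j - d i)` and
`g_k a g_k⁻¹ - a = D_k g_k⁻¹`. As `g_k⁻¹` is again upper unipotent, once row `i` of every `D_k`
vanishes to the left of column `j > i`, the `(i, j)` entry of the bounded sequence `g_k a g_k⁻¹`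
is `g_k i j * (d j - d i)`. By the dichotomy this forces `g_k i j = 0` for all `k` or `d i = d j`,
so sweeping each row from left to right shows `D_k = 0`.
-/

lemma eq_zero_of_tendsto_abs_atTop_of_abs_mul_le {α : Type*} {l : Filter α} [l.NeBot]
    {x : α → ℝ} {y C : ℝ} (hx : Tendsto (fun k => |x k|) l atTop) (hC : ∀ k, |x k * y| ≤ C) :
    y = 0 := by
  by_contra hy
  have hxy : Tendsto (fun k => |x k| * |y|) l atTop := hx.atTop_mul_const (abs_pos.2 hy)
  obtain ⟨k, hk⟩ := (hxy.eventually_gt_atTop C).exists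
  exact (hC k).not_gt (by rwa [abs_mul])

namespace Matrix

lemma norm_apply_le_frobenius_norm {m n α : Type*} [Fintype m] [Fintype n]
    [NormedAddCommGroup α] (A : Matrix m n α) (i : m) (j : n) : ‖A i j‖ ≤ ‖A‖ :=
  (PiLp.norm_apply_le (WithLp.toLp 2 fun j => A i j) j).trans
    (PiLp.norm_apply_le (WithLp.toLp 2 fun i => WithLp.toLp 2 fun j => A i j) i)

variable {ι R : Type*}

lemma mul_diagonal_sub_diagonal_mul_apply [Fintype ι] [DecidableEq ι] [CommRing R]
    (M : Matrix ι ι R) (d : ι → R) (i j : ι) :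
    (M * diagonal d - diagonal d * M) i j = M i j * (d j - d i) := by
  simp only [sub_apply, mul_diagonal, diagonal_mul]
  ring

variable [Fintype ι] [LinearOrder ι]

lemma IsUpperTriangular.mul_apply_self [NonUnitalNonAssocSemiring R] {M N : Matrix ι ι R}
    (hM : M.IsUpperTriangular) (hN : N.IsUpperTriangular) (i : ι) :
    (M * N) i i = M i i * N i i := by
  rw [mul_apply, Finset.sum_eq_single i]
  · intro l _ hli
    rcases hli.lt_or_gt with h | h
    · rw [hM h, zero_mul]
    · rw [hN h, mul_zero]
  · simp

lemma mul_apply_eq_of_forall_lt_eq_zero [NonAssocSemiring R]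
    {D M : Matrix ι ι R} (hM : M.IsUpperTriangular) {i j : ι} (hjj : M j j = 1)
    (hD : ∀ l < j, D i l = 0) : (D * M) i j = D i j := by
  rw [mul_apply, Finset.sum_eq_single j]
  · rw [hjj, mul_one]
  · intro l _ hlj
    rcases hlj.lt_or_gt with h | h
    · rw [hD l h, zero_mul]
    · rw [hM h, mul_zero]
  · simp

end Matrix

open Matrix

namespace IsUpperUnip

variable {n : ℕ} {g : Matrix (Fin n) (Fin n) ℝ}

lemma isUpperTriangular (hg : IsUpperUnip g) : g.IsUpperTriangular :=
  fun i j h => hg.2 i j h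

lemma det_eq_one (hg : IsUpperUnip g) : g.det = 1 := by
  simp [det_of_isUpperTriangular hg.isUpperTriangular, hg.1]

lemma mul_inv_cancel (hg : IsUpperUnip g) : g * g⁻¹ = 1 :=
  mul_nonsing_inv g (by simp [hg.det_eq_one])

lemma inv (hg : IsUpperUnip g) : IsUpperUnip g⁻¹ := by
  have : Invertible g := g.invertibleOfIsUnitDet (by simp [hg.det_eq_one])
  have htri : g⁻¹.IsUpperTriangular := blockTriangular_inv_of_blockTriangular hg.isUpperTriangular
  refine ⟨fun i => ?_, fun i j h => htri h⟩
  simpa [hg.mul_inv_cancel, hg.1 i] using (hg.isUpperTriangular.mul_apply_self htri i).symm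

lemma conj_sub_apply (hg : IsUpperUnip g) (a : Matrix (Fin n) (Fin n) ℝ) {i j : Fin n}
    (hleft : ∀ l < j, (g * a - a * g) i l = 0) :
    (g * a * g⁻¹ - a) i j = (g * a - a * g) i j := by
  have hconj : g * a * g⁻¹ - a = (g * a - a * g) * g⁻¹ := by
    rw [Matrix.sub_mul, Matrix.mul_assoc a, hg.mul_inv_cancel, Matrix.mul_one]
  rw [hconj, mul_apply_eq_of_forall_lt_eq_zero hg.inv.isUpperTriangular (hg.inv.1 j) hleft]

end IsUpperUnip

theorem stmt_10_general {n : ℕ} (g : ℕ → Matrix (Fin n) (Fin n) ℝ)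
    (hg : ∀ k, IsUpperUnip (g k))
    (hdich : ∀ i j : Fin n, i < j →
      (∀ k, g k i j = 0) ∨ Tendsto (fun k => |g k i j|) atTop atTop)
    (a : Matrix (Fin n) (Fin n) ℝ)
    (hadiag : ∀ i j : Fin n, i ≠ j → a i j = 0)
    (hbdd : Bornology.IsBounded (Set.range fun k => g k * a * (g k)⁻¹)) :
    ∀ k, g k * a = a * g k := by
  obtain ⟨d, rfl⟩ : ∃ d, a = diagonal d := ⟨a.diag, (IsDiag.diagonal_diag hadiag).symm⟩
  obtain ⟨C, hC⟩ := hbdd.exists_norm_le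
  have hcomm := fun k => mul_diagonal_sub_diagonal_mul_apply (g k) d
  suffices h : ∀ i j k, (g k * diagonal d - diagonal d * g k) i j = 0 from
    fun k => sub_eq_zero.1 (ext fun i j => h i j k)
  intro i j
  induction j using WellFoundedLT.induction with | _ j ih
  intro k
  rw [hcomm]
  rcases lt_or_ge i j with hij | hji
  · rcases hdich i j hij with h0 | htend
    · rw [h0 k, zero_mul]
    · suffices hd : d j - d i = 0 by rw [hd, mul_zero]
      refine eq_zero_of_tendsto_abs_atTop_of_abs_mul_le htend (C := C) fun k => ?_
      rw [← hcomm, ← (hg k).conj_sub_apply _ (fun l hl => ih l hl k), Matrix.sub_apply,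
        diagonal_apply_ne _ hij.ne, sub_zero, ← Real.norm_eq_abs]
      exact (norm_apply_le_frobenius_norm _ i j).trans (hC _ ⟨k, rfl⟩)
  · rcases hji.lt_or_eq with hji | rfl
    · rw [(hg k).2 i j hji, zero_mul]
    · rw [sub_self, mul_zero]

/-- **Lemma (al52).** Let `{g_k}` be a sequence of upper triangular unipotent matrices
satisfying the dichotomy condition, and let `a` be a diagonal matrix in `SL(n,ℝ)` with positive
diagonal entries.  If `{g_k a g_k⁻¹}` is bounded (in the Frobenius norm), then `g_k` commutes
with `a` for every `k`. -/
theorem stmt_10 {n : ℕ} (g : ℕ → Matrix (Fin n) (Fin n) ℝ)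
    (hg : ∀ k, IsUpperUnip (g k))
    (hdich : ∀ i j : Fin n, i < j →
      (∀ k, g k i j = 0) ∨ Tendsto (fun k => |g k i j|) atTop atTop)
    (a : Matrix (Fin n) (Fin n) ℝ)
    (hadiag : ∀ i j : Fin n, i ≠ j → a i j = 0)
    (hapos : ∀ i : Fin n, 0 < a i i)
    (hadet : a.det = 1)
    (hbdd : Bornology.IsBounded (Set.range fun k => g k * a * (g k)⁻¹)) :
    ∀ k, g k * a = a * g k :=
  stmt_10_general g hg hdich a hadiag hbdd
end

section
/- Let {g_k} be a sequence in the group N of n×n real upper triangular unipotent matrices satisfying the dichotomy condition, with associated graph G({g_k}) on the vertex set [n]. For 1 ≤ l ≤ n and a nonempty subset I = {i₁ < ··· < i_l} ⊆ [n], let e_I = e_{i₁} ∧ ··· ∧ e_{i_l} ∈ ⋀^l ℝⁿ, where e₁,…,e_n is the standard basis. Then the sequence {g_k · e_I} (the induced action of g_k on ⋀^l ℝⁿ) is bounded if and only if I is UDS in the ordered vertex set [n] of G({g_k}); and in that case g_k · e_I = e_I for every k. -/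
open Filter Topology

/-- The coordinate of `g·e_I` in the standard wedge basis vector `e_J` of `⋀^l ℝⁿ`
(where `l = I.card = J.card`): the minor of `g` with rows `J` and columns `I`.
If the cardinalities disagree, the value is `0`. -/
noncomputable def wedgeCoord {n : ℕ} (g : Matrix (Fin n) (Fin n) ℝ)
    (J I : Finset (Fin n)) : ℝ :=
  if h : J.card = I.card then
    (g.submatrix (fun a : Fin I.card => (J.orderIsoOfFin h a : Fin n))
      (fun b : Fin I.card => (I.orderIsoOfFin rfl b : Fin n))).det
  else 0

/-- `I` is UDS (uniquely determined by successors) in the ordered vertex set `{1,…,n}` of the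
graph associated to `{g_k}`: if `j ∈ I` and `i < j` is joined to `j` (i.e. `u_{ij}(k) → ∞`),
then `i ∈ I`. -/
def IsUDSFor {n : ℕ} (g : ℕ → Matrix (Fin n) (Fin n) ℝ) (I : Finset (Fin n)) : Prop :=
  ∀ j ∈ I, ∀ i : Fin n, i < j → Tendsto (fun k => |g k i j|) atTop atTop → i ∈ I

private lemma wedgeCoord_self {n : ℕ} {u : Matrix (Fin n) (Fin n) ℝ} (hu : IsUpperUnip u)
    (I : Finset (Fin n)) : wedgeCoord u I I = 1 := by
  rw [wedgeCoord, dif_pos rfl]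
  rw [Matrix.det_of_upperTriangular]
  · exact Finset.prod_eq_one fun b _ => hu.1 _
  · intro b c hlt
    exact hu.2 _ _ (Subtype.coe_lt_coe.2 ((I.orderIsoOfFin rfl).strictMono hlt))

private lemma wedgeCoord_swap {n : ℕ} {u : Matrix (Fin n) (Fin n) ℝ} (hu : IsUpperUnip u)
    {I : Finset (Fin n)} {i j : Fin n} (hjI : j ∈ I) (hiI : i ∉ I) (hij : i < j)
    (hrz : ∀ b ∈ I, b < j → u i b = 0) :
    |wedgeCoord u (insert i (I.erase j)) I| = |u i j| := by
  classical
  set J : Finset (Fin n) := insert i (I.erase j) with hJdef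
  have hiJ' : i ∉ I.erase j := fun h => hiI (Finset.mem_of_mem_erase h)
  have hJcard : J.card = I.card := by
    rw [hJdef, Finset.card_insert_of_notMem hiJ', Finset.card_erase_of_mem hjI]
    exact Nat.succ_pred_eq_of_pos (Finset.card_pos.mpr ⟨j, hjI⟩)
  set oI := I.orderIsoOfFin rfl with hoI
  set oJ := J.orderIsoOfFin hJcard with hoJ
  set p : Fin I.card := oI.symm ⟨j, hjI⟩ with hp
  have hoIp : (oI p : Fin n) = j := by rw [hp]; simp
  set f : Fin I.card → Fin n := fun b => if b = p then i else (oI b : Fin n) with hf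
  have hfJ : ∀ b, f b ∈ J := by
    intro b
    by_cases hb : b = p
    · simp [hf, hb, hJdef]
    · rw [hf]; simp only [if_neg hb]
      refine Finset.mem_insert_of_mem (Finset.mem_erase.2 ⟨?_, (oI b).2⟩)
      intro h
      exact hb (oI.injective (Subtype.ext (h.trans hoIp.symm)) : b = p)
  have hfinj : Function.Injective f := by
    intro a b hab
    by_cases ha : a = p <;> by_cases hb : b = p
    · rw [ha, hb]
    · exfalso; rw [hf] at hab; simp only [if_pos ha, if_neg hb] at hab
      exact hiI (hab ▸ (oI b).2)
    · exfalso; rw [hf] at hab; simp only [if_neg ha, if_pos hb] at hab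
      exact hiI (hab ▸ (oI a).2)
    · rw [hf] at hab; simp only [if_neg ha, if_neg hb] at hab
      exact oI.injective (Subtype.ext hab)
  set f' : Fin I.card → {x // x ∈ J} := fun b => ⟨f b, hfJ b⟩ with hf'
  have hf'bij : Function.Bijective f' := by
    refine (Fintype.bijective_iff_injective_and_card f').2
      ⟨fun a b h => hfinj (congrArg Subtype.val h), by simp [hJcard]⟩
  set e₁ : Fin I.card ≃ {x // x ∈ J} := Equiv.ofBijective f' hf'bij with he₁
  set τ : Equiv.Perm (Fin I.card) := oJ.toEquiv.trans e₁.symm with hτdef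
  have hτ : ∀ a, f (τ a) = (oJ a : Fin n) := by
    intro a
    have : f' (τ a) = oJ a := e₁.apply_symm_apply (oJ a)
    exact congrArg Subtype.val this
  set M' : Matrix (Fin I.card) (Fin I.card) ℝ :=
    Matrix.of fun b c => u (f b) (oI c) with hM'
  have hsub : (u.submatrix (fun a : Fin I.card => (oJ a : Fin n))
      (fun c : Fin I.card => (oI c : Fin n))) = M'.submatrix τ id := by
    ext a c
    simp [Matrix.submatrix_apply, hM', hτ a]
  have htri : M'.BlockTriangular id := by
    intro b c hlt
    by_cases hb : b = p
    · subst hb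
      have h1 : (oI c : Fin n) < j := by
        rw [← hoIp]; exact Subtype.coe_lt_coe.2 (oI.strictMono hlt)
      have : f p = i := by rw [hf]; simp
      simp only [hM', Matrix.of_apply, this]
      exact hrz _ (oI c).2 h1
    · have : f b = (oI b : Fin n) := by rw [hf]; simp [hb]
      simp only [hM', Matrix.of_apply, this]
      exact hu.2 _ _ (Subtype.coe_lt_coe.2 (oI.strictMono hlt))
  have hdiag : ∀ b, M' b b = if b = p then u i j else 1 := by
    intro b
    by_cases hb : b = p
    · subst hb
      have : f p = i := by rw [hf]; simp
      simp [hM', this, hoIp]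
    · have : f b = (oI b : Fin n) := by rw [hf]; simp [hb]
      simp [hM', this, hb, hu.1]
  have hdet : M'.det = u i j := by
    rw [Matrix.det_of_upperTriangular htri]
    rw [Finset.prod_congr rfl fun b _ => hdiag b]
    simp
  rw [wedgeCoord, dif_pos hJcard, hsub, Matrix.det_permute, hdet, abs_mul]
  have : |((Equiv.Perm.sign τ : ℤ) : ℝ)| = 1 := by
    rcases Int.units_eq_one_or (Equiv.Perm.sign τ) with h | h <;> simp [h]
  rw [this, one_mul]

private lemma partB {n : ℕ} (g : ℕ → Matrix (Fin n) (Fin n) ℝ)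
    (hg : ∀ k, IsUpperUnip (g k))
    (hdich : ∀ i j : Fin n, i < j →
      (∀ k, g k i j = 0) ∨ Tendsto (fun k => |g k i j|) atTop atTop)
    (I : Finset (Fin n)) (hU : IsUDSFor g I) :
    ∀ k, ∀ J : Finset (Fin n), J.card = I.card →
      wedgeCoord (g k) J I = if J = I then 1 else 0 := by
  intro k J hJ
  split_ifs with h
  · subst h; exact wedgeCoord_self (hg k) J
  · obtain ⟨a, haJ, haI⟩ : ∃ a ∈ J, a ∉ I := by
      by_contra hc
      push_neg at hc
      exact h (Finset.eq_of_subset_of_card_le hc (le_of_eq hJ.symm))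
    rw [wedgeCoord, dif_pos hJ]
    apply Matrix.det_eq_zero_of_row_eq_zero ((J.orderIsoOfFin hJ).symm ⟨a, haJ⟩)
    intro c
    have hrow : (J.orderIsoOfFin hJ ((J.orderIsoOfFin hJ).symm ⟨a, haJ⟩) : Fin n) = a := by
      simp
    rw [Matrix.submatrix_apply, hrow]
    set b : Fin n := (I.orderIsoOfFin rfl c : Fin n) with hb
    rcases lt_trichotomy a b with hlt | heq | hgt
    · rcases hdich a b hlt with h0 | ht
      · exact h0 k
      · exact absurd (hU b (I.orderIsoOfFin rfl c).2 a hlt ht) haI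
    · exact absurd (heq ▸ (I.orderIsoOfFin rfl c).2) haI
    · exact (hg k).2 _ _ hgt

/-- **Proposition (p43).** Let `{g_k}` be a sequence of upper triangular unipotent matrices
satisfying the dichotomy condition.  For a nonempty `I ⊆ {1,…,n}`, the sequence `{g_k·e_I}` in
`⋀^{|I|} ℝⁿ` is bounded if and only if `I` is UDS in the vertex set of the associated graph;
and in that case `g_k·e_I = e_I` for every `k`.  (Here `g·e_I` is expressed through its
coordinates `wedgeCoord g J I` in the standard wedge basis.) -/
theorem stmt_12 {n : ℕ} (g : ℕ → Matrix (Fin n) (Fin n) ℝ)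
    (hg : ∀ k, IsUpperUnip (g k))
    (hdich : ∀ i j : Fin n, i < j →
      (∀ k, g k i j = 0) ∨ Tendsto (fun k => |g k i j|) atTop atTop)
    (I : Finset (Fin n)) (hI : I.Nonempty) :
    ((∃ C : ℝ, ∀ k, ∀ J : Finset (Fin n), J.card = I.card →
        |wedgeCoord (g k) J I| ≤ C) ↔ IsUDSFor g I) ∧
      (IsUDSFor g I → ∀ k, ∀ J : Finset (Fin n), J.card = I.card →
        wedgeCoord (g k) J I = if J = I then 1 else 0) := by
  classical
  refine ⟨⟨?_, ?_⟩, partB g hg hdich I⟩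
  · rintro ⟨C, hC⟩
    by_contra hUDS
    -- extract a violating pair with minimal j
    set S : Finset (Fin n) :=
      I.filter (fun j => ∃ i, i < j ∧ i ∉ I ∧ Tendsto (fun k => |g k i j|) atTop atTop)
      with hS
    have hSne : S.Nonempty := by
      rw [IsUDSFor] at hUDS
      push_neg at hUDS
      obtain ⟨j, hjI, i, hij, ht, hiI⟩ := hUDS
      exact ⟨j, Finset.mem_filter.2 ⟨hjI, i, hij, hiI, ht⟩⟩
    set j : Fin n := S.min' hSne with hj
    have hjS : j ∈ S := S.min'_mem hSne
    obtain ⟨hjI, i, hij, hiI, htend⟩ := Finset.mem_filter.1 hjS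
    have hrz : ∀ k, ∀ b ∈ I, b < j → g k i b = 0 := by
      intro k b hbI hbj
      rcases lt_trichotomy i b with hlt | heq | hgt
      · rcases hdich i b hlt with h0 | ht
        · exact h0 k
        · have : b ∈ S := Finset.mem_filter.2 ⟨hbI, i, hlt, hiI, ht⟩
          exact absurd (S.min'_le b this) (not_le.2 hbj)
      · exact absurd (heq ▸ hbI) hiI
      · exact (hg k).2 _ _ hgt
    have hJcard : (insert i (I.erase j)).card = I.card := by
      rw [Finset.card_insert_of_notMem (fun h => hiI (Finset.mem_of_mem_erase h)),
        Finset.card_erase_of_mem hjI]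
      exact Nat.succ_pred_eq_of_pos (Finset.card_pos.mpr ⟨j, hjI⟩)
    have key : ∀ k, |wedgeCoord (g k) (insert i (I.erase j)) I| = |g k i j| :=
      fun k => wedgeCoord_swap (hg k) hjI hiI hij (hrz k)
    obtain ⟨k, hk⟩ := (htend.eventually_ge_atTop (C + 1)).exists
    have h1 := hC k _ hJcard
    rw [key k] at h1
    linarith
  · intro hU
    exact ⟨1, fun k J hJ => by
      rw [partB g hg hdich I hU k J hJ]
      split_ifs <;> simp⟩
end

section
/- Let G(V,E) be a connected finite graph whose vertex set V = {v₁,…,v_n} is linearly ordered. Then one can assign real values x₁,…,x_n to the vertices v₁,…,v_n such that (1) Σ_{i=1}^n x_i = 0, and (2) for every nonempty proper UDS subset S ⊊ V, Σ_{v_i ∈ S} x_i > 0. -/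
/-- A subset `S` of the ordered vertex set of a graph is UDS (uniquely determined by
successors) if whenever `v ∈ S` and `w` precedes `v` in the order and is adjacent to `v`,
then `w ∈ S`. -/
def IsUDS {n : ℕ} (G : SimpleGraph (Fin n)) (S : Finset (Fin n)) : Prop :=
  ∀ v ∈ S, ∀ w : Fin n, w < v → G.Adj w v → w ∈ S

/-- **Lemma (l41).** Let `G` be a connected finite graph on a linearly ordered vertex set
`{v₁,…,v_n}`.  Then one can assign real values `x₁,…,x_n` to the vertices such that
(1) `Σ x_i = 0`, and (2) for every nonempty proper UDS subset `S`, `Σ_{v_i ∈ S} x_i > 0`. -/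
theorem stmt_13 {n : ℕ} (G : SimpleGraph (Fin n)) (hG : G.Connected) :
    ∃ x : Fin n → ℝ, (∑ i, x i) = 0 ∧
      ∀ S : Finset (Fin n), S.Nonempty → S ≠ Finset.univ → IsUDS G S →
        0 < ∑ i ∈ S, x i := by
  classical
  set f : Fin n → Fin n → ℝ := fun i j => if i < j ∧ G.Adj i j then (1 : ℝ) else 0 with hf
  have hf_nonneg : ∀ i j, 0 ≤ f i j := by
    intro i j; simp only [hf]; positivity
  refine ⟨fun i => (∑ j, f i j) - (∑ j, f j i), ?_, ?_⟩
  · rw [Finset.sum_sub_distrib]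
    rw [Finset.sum_comm (f := fun i j => f j i)]
    ring
  · intro S hS hSne hUDS
    obtain ⟨a, ha⟩ := hS
    obtain ⟨b, hb⟩ : ∃ b, b ∉ S := by
      by_contra h
      push_neg at h
      exact hSne (Finset.eq_univ_iff_forall.mpr h)
    -- there is an edge from S to its complement
    obtain ⟨d, _, hdS, hdS'⟩ :=
      ((hG.preconnected a b).some).exists_boundary_dart (↑S : Set (Fin n))
        (by simpa using ha) (by simpa using hb)
    have hdS : d.fst ∈ S := by simpa using hdS
    have hdS' : d.snd ∉ S := by simpa using hdS'
    have hlt : d.fst < d.snd := by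
      rcases lt_trichotomy d.fst d.snd with h | h | h
      · exact h
      · exact absurd (h ▸ d.adj) (G.irrefl)
      · exact absurd (hUDS d.fst hdS d.snd h d.adj.symm) hdS'
    -- rewrite the sum
    have key : ∑ i ∈ S, ((∑ j, f i j) - (∑ j, f j i))
        = ∑ i ∈ S, ∑ j ∈ Sᶜ, f i j := by
      have h1 : ∀ i ∈ S, (∑ j, f j i) = ∑ j ∈ S, f j i := by
        intro i hi
        rw [← Finset.sum_subset (Finset.subset_univ S)]
        intro j _ hj
        simp only [hf]
        rw [if_neg]
        rintro ⟨hji, hadj⟩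
        exact hj (hUDS i hi j hji hadj)
      calc ∑ i ∈ S, ((∑ j, f i j) - (∑ j, f j i))
          = ∑ i ∈ S, ((∑ j, f i j) - ∑ j ∈ S, f j i) := by
            apply Finset.sum_congr rfl
            intro i hi; rw [h1 i hi]
        _ = (∑ i ∈ S, ∑ j, f i j) - ∑ i ∈ S, ∑ j ∈ S, f j i := by
            rw [Finset.sum_sub_distrib]
        _ = (∑ i ∈ S, ∑ j, f i j) - ∑ i ∈ S, ∑ j ∈ S, f i j := by
            rw [Finset.sum_comm (s := S) (t := S) (f := fun i j => f j i)]
        _ = ∑ i ∈ S, ((∑ j ∈ S, f i j) + (∑ j ∈ Sᶜ, f i j) - ∑ j ∈ S, f i j) := by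
            rw [Finset.sum_sub_distrib]
            congr 1
            apply Finset.sum_congr rfl
            intro i _
            rw [Finset.sum_add_sum_compl]
        _ = ∑ i ∈ S, ∑ j ∈ Sᶜ, f i j := by
            apply Finset.sum_congr rfl; intros; ring
    rw [key]
    apply Finset.sum_pos' (fun i _ => Finset.sum_nonneg fun j _ => hf_nonneg i j)
    refine ⟨d.fst, hdS, ?_⟩
    have : f d.fst d.snd = 1 := by
      simp only [hf]
      rw [if_pos ⟨hlt, d.adj⟩]
    calc (0 : ℝ) < 1 := one_pos
      _ = f d.fst d.snd := this.symm
      _ ≤ ∑ j ∈ Sᶜ, f d.fst j :=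
        Finset.single_le_sum (fun j _ => hf_nonneg d.fst j) (by simpa using hdS')
end

section
/- Let E be a real normed vector space and let α₁,…,α_m be m pairwise distinct linear functionals on E. Then for any r > 0 there exist vectors x₁,…,x_m in the ball B_r(0) of radius r about the origin in E such that the m×m matrix with entries e^{α_i(x_j)} has nonzero determinant. -/
/-- If finitely many linear functionals are all nonzero, there is a common point where
none of them vanishes. -/
lemma exists_forall_ne_zero {E : Type*} [NormedAddCommGroup E] [NormedSpace ℝ E]
    {ι : Type*} (β : ι → (E →ₗ[ℝ] ℝ)) (s : Finset ι) (hs : ∀ t ∈ s, β t ≠ 0) :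
    ∃ y : E, ∀ t ∈ s, β t y ≠ 0 := by
  classical
  induction s using Finset.induction with
  | empty => exact ⟨0, by simp⟩
  | @insert a s ha ih =>
    obtain ⟨y, hy⟩ := ih (fun t ht => hs t (Finset.mem_insert_of_mem ht))
    have hβa : β a ≠ 0 := hs a (Finset.mem_insert_self a s)
    obtain ⟨z, hz⟩ : ∃ z, β a z ≠ 0 := by
      by_contra h
      push_neg at h
      exact hβa (LinearMap.ext fun w => h w)
    set T : Finset ℝ := (insert a s).image (fun t => -(β t y) / (β t z)) with hT
    obtain ⟨c, hc⟩ := Infinite.exists_notMem_finset T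
    refine ⟨y + c • z, fun t ht => ?_⟩
    by_cases hz0 : β t z = 0
    · have ht' : t ∈ s := by
        rcases Finset.mem_insert.1 ht with rfl | h
        · exact absurd hz0 hz
        · exact h
      simpa [hz0] using hy t ht'
    · intro habs
      apply hc
      rw [hT, Finset.mem_image]
      refine ⟨t, ht, ?_⟩
      have : β t y + c * β t z = 0 := by simpa [map_add, map_smul, smul_eq_mul] using habs
      field_simp
      linarith

/-- **Lemma (p62).** Let `E` be a real normed vector space and `α₁,…,α_m` pairwise distinct
linear functionals on `E`.  Then for any `r > 0` there exist `x₁,…,x_m` in the ball of radius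
`r` about the origin such that `det (e^{α_i(x_j)}) ≠ 0`. -/
theorem stmt_15 {E : Type*} [NormedAddCommGroup E] [NormedSpace ℝ E] {m : ℕ}
    (α : Fin m → (E →ₗ[ℝ] ℝ)) (hα : Function.Injective α) {r : ℝ} (hr : 0 < r) :
    ∃ x : Fin m → E, (∀ j, ‖x j‖ < r) ∧
      (Matrix.of fun i j : Fin m => Real.exp (α i (x j))).det ≠ 0 := by
  classical
  -- find y separating all the functionals
  set s : Finset (Fin m × Fin m) := Finset.univ.filter (fun p => p.1 ≠ p.2) with hs
  obtain ⟨y, hy⟩ := exists_forall_ne_zero (E := E) (fun p => α p.1 - α p.2) s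
    (by
      intro p hp
      have hne : p.1 ≠ p.2 := (Finset.mem_filter.1 hp).2
      intro h
      exact hne (hα (by rwa [sub_eq_zero] at h)))
  have hy' : ∀ i j : Fin m, i ≠ j → α i y ≠ α j y := by
    intro i j hij
    have := hy (i, j) (by simp [hs, hij])
    simpa [sub_eq_zero] using this
  -- choose a small scaling factor
  set δ : ℝ := r / (m * ‖y‖ + 1) with hδ
  have hden : (0:ℝ) < m * ‖y‖ + 1 := by positivity
  have hδpos : 0 < δ := div_pos hr hden
  refine ⟨fun j => ((j : ℕ) : ℝ) • (δ • y), fun j => ?_, ?_⟩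
  · have hj : ((j : ℕ) : ℝ) ≤ (m : ℝ) := by
      exact_mod_cast (j.2.le)
    have h1 : ‖((j : ℕ) : ℝ) • (δ • y)‖ = ((j : ℕ) : ℝ) * (δ * ‖y‖) := by
      rw [norm_smul, norm_smul, Real.norm_eq_abs, Real.norm_eq_abs,
        abs_of_nonneg hδpos.le, abs_of_nonneg (by positivity : (0:ℝ) ≤ ((j:ℕ):ℝ))]
    rw [h1]
    calc ((j : ℕ) : ℝ) * (δ * ‖y‖) ≤ (m : ℝ) * (δ * ‖y‖) := by
          apply mul_le_mul_of_nonneg_right hj (by positivity)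
      _ = δ * ((m : ℝ) * ‖y‖) := by ring
      _ < δ * ((m : ℝ) * ‖y‖ + 1) := by nlinarith
      _ = r := by rw [hδ]; field_simp
  · have key : (Matrix.of fun i j : Fin m => Real.exp (α i (((j : ℕ) : ℝ) • (δ • y)))) =
        Matrix.vandermonde (fun i => Real.exp (δ * α i y)) := by
      ext i j
      simp only [Matrix.of_apply, Matrix.vandermonde_apply, map_smul, smul_eq_mul,
        ← Real.exp_nat_mul]
    rw [key]
    rw [Ne, Matrix.det_vandermonde_eq_zero_iff]
    rintro ⟨i, j, hexp, hij⟩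
    have : δ * α i y = δ * α j y := Real.exp_injective hexp
    exact hy' i j hij (mul_left_cancel₀ (ne_of_gt hδpos) this)
end

section
/- Let {u_k} be any sequence in the group N of n×n real upper triangular unipotent matrices. Then there is a subsequence {u_{i_k}} of {u_k} and a factorization u_{i_k} = b_k v_k, where {b_k} is a bounded sequence in N and {v_k} is a sequence in N, v_k = (v_{ij}(k)), satisfying the following dichotomy: for each pair (i,j) with 1 ≤ i < j ≤ n, either v_{ij}(k) = 0 for all k, or v_{ij}(k) → ∞ as k → ∞. -/
/-!
Clear the entries above the diagonal one at a time, column by column from left to right.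
Passing to a subsequence, the current entry `v k i j` is either bounded or tends to infinity in
absolute value. In the bounded case it is moved into the bounded factor by the transvection
`v ↦ transvection i j (-v i j) * v`, which kills the entry and only changes entries of row `i`
in columns to the right of `j`, none of which has been treated yet.
-/

open Filter Topology

attribute [local instance] Matrix.frobeniusNormedAddCommGroup

open Matrix

section

variable {n : ℕ}

def ZeroOrDivergent (w : ℕ → ℝ) : Prop :=
  (∀ k, w k = 0) ∨ Tendsto (fun k => |w k|) atTop atTop

theorem ZeroOrDivergent.comp_strictMono {w : ℕ → ℝ} (hw : ZeroOrDivergent w) {ψ : ℕ → ℕ}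
    (hψ : StrictMono ψ) : ZeroOrDivergent (w ∘ ψ) :=
  hw.imp (fun h k => h (ψ k)) fun h => h.comp hψ.tendsto_atTop

theorem exists_subseq_isBounded_or_tendsto_norm {E : Type*} [SeminormedAddCommGroup E]
    (c : ℕ → E) : ∃ ψ : ℕ → ℕ, StrictMono ψ ∧
      (Bornology.IsBounded (Set.range (c ∘ ψ)) ∨ Tendsto (fun k => ‖c (ψ k)‖) atTop atTop) := by
  by_cases h : ∀ m : ℕ, ∃ᶠ k in atTop, (m : ℝ) < ‖c k‖
  · obtain ⟨ψ, hψ, hlt⟩ := extraction_forall_of_frequently h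
    exact ⟨ψ, hψ, .inr (tendsto_atTop_mono (fun k => (hlt k).le) tendsto_natCast_atTop_atTop)⟩
  · push Not at h
    obtain ⟨m, hm⟩ := h
    obtain ⟨N, hN⟩ := eventually_atTop.1 hm
    refine ⟨(· + N), strictMono_id.add_const N, .inl ?_⟩
    exact isBounded_iff_forall_norm_le.2 ⟨m, Set.forall_mem_range.2 fun k => hN _ le_add_self⟩

theorem continuous_transvection {m : Type*} [Fintype m] [DecidableEq m] (i j : m) :
    Continuous (transvection i j : ℝ → Matrix m m ℝ) :=
  continuous_const.add (continuous_pi fun _ => continuous_pi fun _ => by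
    simp only [single_apply]; split_ifs <;> fun_prop)

theorem Bornology.IsBounded.range_transvection {m : Type*} [Fintype m] [DecidableEq m]
    (i j : m) {c : ℕ → ℝ} (hc : Bornology.IsBounded (Set.range c)) :
    Bornology.IsBounded (Set.range fun k => transvection i j (c k)) :=
  (hc.isCompact_closure.image (continuous_transvection i j)).isBounded.subset <|
    Set.range_subset_iff.2 fun k => ⟨c k, subset_closure ⟨k, rfl⟩, rfl⟩

open scoped Matrix.Norms.Frobenius in
theorem Bornology.IsBounded.range_mul {m : Type*} [Fintype m] [DecidableEq m]
    {b t : ℕ → Matrix m m ℝ} (hb : Bornology.IsBounded (Set.range b))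
    (ht : Bornology.IsBounded (Set.range t)) :
    Bornology.IsBounded (Set.range fun k => b k * t k) :=
  (isBounded_mul hb ht).subset (Set.range_subset_iff.2 fun k => Set.mul_mem_mul ⟨k, rfl⟩ ⟨k, rfl⟩)

theorem transvection_mul_apply_of_ne_or_lt {m R : Type*} [Fintype m] [DecidableEq m]
    [LinearOrder m] [CommRing R] {M : Matrix m m R} (hM : M.IsUpperTriangular) {i j a b : m}
    (c : R) (h : a ≠ i ∨ b < j) : (transvection i j c * M) a b = M a b := by
  by_cases ha : a = i
  · subst ha
    rw [transvection_mul_apply_same, hM (h.resolve_left (not_not_intro rfl)), mul_zero, add_zero]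
  · exact transvection_mul_apply_of_ne i j a b ha c M

theorem IsUpperUnip.isUpperTriangular_s19 {u : Matrix (Fin n) (Fin n) ℝ} (hu : IsUpperUnip u) :
    u.IsUpperTriangular :=
  fun i j h => hu.2 i j h

theorem isUpperUnip_one : IsUpperUnip (1 : Matrix (Fin n) (Fin n) ℝ) :=
  ⟨fun _ => one_apply_eq _, fun _ _ h => one_apply_ne h.ne'⟩

theorem isUpperUnip_transvection {i j : Fin n} (hij : i < j) (c : ℝ) :
    IsUpperUnip (transvection i j c) := by
  refine ⟨fun a => ?_, fun a b hba => ?_⟩ <;>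
    rw [transvection, Matrix.add_apply, single_apply_of_ne, add_zero]
  · exact one_apply_eq a
  · rintro ⟨rfl, rfl⟩
    exact lt_irrefl _ hij
  · exact one_apply_ne hba.ne'
  · rintro ⟨rfl, rfl⟩
    exact lt_asymm hij hba

theorem IsUpperUnip.mul {A B : Matrix (Fin n) (Fin n) ℝ} (hA : IsUpperUnip A)
    (hB : IsUpperUnip B) : IsUpperUnip (A * B) := by
  refine ⟨fun i => ?_, fun i j hji => hA.isUpperTriangular_s19.mul hB.isUpperTriangular_s19 hji⟩
  rw [mul_apply, Finset.sum_eq_single i (fun l _ hl => ?_) (by simp), hA.1, hB.1, one_mul]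
  rcases hl.lt_or_gt with h | h
  · rw [hA.2 i l h, zero_mul]
  · rw [hB.2 l i h, mul_zero]

structure IsBoundedFactorization (u : ℕ → Matrix (Fin n) (Fin n) ℝ) (φ : ℕ → ℕ)
    (b v : ℕ → Matrix (Fin n) (Fin n) ℝ) : Prop where
  strictMono : StrictMono φ
  isUpperUnip_left : ∀ k, IsUpperUnip (b k)
  isUpperUnip_right : ∀ k, IsUpperUnip (v k)
  eq_mul : ∀ k, u (φ k) = b k * v k
  isBounded_left : Bornology.IsBounded (Set.range b)

namespace IsBoundedFactorization

variable {u : ℕ → Matrix (Fin n) (Fin n) ℝ} {φ : ℕ → ℕ} {b v : ℕ → Matrix (Fin n) (Fin n) ℝ}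

theorem one_left (hu : ∀ k, IsUpperUnip (u k)) : IsBoundedFactorization u id (fun _ => 1) u where
  strictMono := strictMono_id
  isUpperUnip_left _ := isUpperUnip_one
  isUpperUnip_right := hu
  eq_mul _ := (one_mul _).symm
  isBounded_left := Bornology.isBounded_singleton.subset (Set.range_subset_iff.2 fun _ => rfl)

theorem comp (h : IsBoundedFactorization u φ b v) {ψ : ℕ → ℕ} (hψ : StrictMono ψ) :
    IsBoundedFactorization u (φ ∘ ψ) (b ∘ ψ) (v ∘ ψ) where
  strictMono := h.strictMono.comp hψ
  isUpperUnip_left k := h.isUpperUnip_left (ψ k)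
  isUpperUnip_right k := h.isUpperUnip_right (ψ k)
  eq_mul k := h.eq_mul (ψ k)
  isBounded_left := h.isBounded_left.subset (Set.range_comp_subset_range ψ b)

theorem mul_transvection (h : IsBoundedFactorization u φ b v) {i j : Fin n} (hij : i < j)
    {c : ℕ → ℝ} (hc : Bornology.IsBounded (Set.range c)) :
    IsBoundedFactorization u φ (fun k => b k * transvection i j (c k))
      (fun k => transvection i j (-c k) * v k) where
  strictMono := h.strictMono
  isUpperUnip_left k := (h.isUpperUnip_left k).mul (isUpperUnip_transvection hij _)
  isUpperUnip_right k := (isUpperUnip_transvection hij _).mul (h.isUpperUnip_right k)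
  eq_mul k := by
    rw [h.eq_mul, mul_assoc, ← mul_assoc (transvection i j _),
      transvection_mul_transvection_same _ _ hij.ne, add_neg_cancel, transvection_zero, one_mul]
  isBounded_left := h.isBounded_left.range_mul (hc.range_transvection i j)

end IsBoundedFactorization

def HasFactorizationOn (u : ℕ → Matrix (Fin n) (Fin n) ℝ) (S : Finset (Fin n × Fin n)) :
    Prop :=
  ∃ φ b v, IsBoundedFactorization u φ b v ∧
    ∀ p ∈ S, p.1 < p.2 → ZeroOrDivergent fun k => v k p.1 p.2

theorem HasFactorizationOn.insert {u : ℕ → Matrix (Fin n) (Fin n) ℝ}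
    {S : Finset (Fin n × Fin n)} (h : HasFactorizationOn u S) {p : Fin n × Fin n}
    (hp : ∀ q ∈ S, q.2 ≤ p.2) : HasFactorizationOn u (insert p S) := by
  obtain ⟨φ, b, v, hf, hS⟩ := h
  by_cases hp' : p.1 < p.2
  swap
  · refine ⟨φ, b, v, hf, fun q hq hq' => ?_⟩
    rcases Finset.mem_insert.1 hq with rfl | hqS
    exacts [absurd hq' hp', hS q hqS hq']
  obtain ⟨ψ, hψ, hbdd | htend⟩ := exists_subseq_isBounded_or_tendsto_norm fun k => v k p.1 p.2
  · refine ⟨φ ∘ ψ, _, _, (hf.comp hψ).mul_transvection hp' hbdd, fun q hq hq' => ?_⟩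
    rcases eq_or_ne q p with rfl | hqp
    · exact .inl fun k => by simp [(hf.isUpperUnip_right _).1]
    have hqS : q ∈ S := Finset.mem_of_mem_insert_of_ne hq hqp
    have hfar : q.1 ≠ p.1 ∨ q.2 < p.2 := by
      by_contra! h
      exact hqp (Prod.ext h.1 ((hp q hqS).antisymm h.2))
    have hq_eq : (fun k => (transvection p.1 p.2 (-v (ψ k) p.1 p.2) * v (ψ k)) q.1 q.2) =
        (fun k => v k q.1 q.2) ∘ ψ :=
      funext fun k =>
        transvection_mul_apply_of_ne_or_lt (hf.isUpperUnip_right _).isUpperTriangular_s19 _ hfar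
    simpa only [Function.comp_apply, hq_eq] using (hS q hqS hq').comp_strictMono hψ
  · refine ⟨φ ∘ ψ, b ∘ ψ, v ∘ ψ, hf.comp hψ, fun q hq hq' => ?_⟩
    rcases Finset.mem_insert.1 hq with rfl | hqS
    · exact .inr (by simpa only [Function.comp_apply, Real.norm_eq_abs] using htend)
    · exact (hS q hqS hq').comp_strictMono hψ

theorem hasFactorizationOn_of_isUpperUnip {u : ℕ → Matrix (Fin n) (Fin n) ℝ}
    (hu : ∀ k, IsUpperUnip (u k)) (S : Finset (Fin n × Fin n)) : HasFactorizationOn u S := by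
  refine Finset.induction_on_max_value Prod.snd S ⟨id, fun _ => 1, u, .one_left hu, by simp⟩ ?_
  exact fun p S _ hp h => h.insert hp

end

/-- **Claim (in the proof of Theorem th11).** Any sequence `{u_k}` in the upper triangular
unipotent group `N` has a subsequence `{u_{i_k}}` which factors as `u_{i_k} = b_k v_k`, where
`{b_k}` is a bounded sequence in `N` and `{v_k}` is a sequence in `N` satisfying the dichotomy
condition: each entry above the diagonal is either identically `0` or diverges to infinity. -/
theorem stmt_19 {n : ℕ} (u : ℕ → Matrix (Fin n) (Fin n) ℝ)
    (hu : ∀ k, IsUpperUnip (u k)) :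
    ∃ φ : ℕ → ℕ, StrictMono φ ∧
      ∃ b v : ℕ → Matrix (Fin n) (Fin n) ℝ,
        (∀ k, IsUpperUnip (b k)) ∧ (∀ k, IsUpperUnip (v k)) ∧
        (∀ k, u (φ k) = b k * v k) ∧
        Bornology.IsBounded (Set.range b) ∧
        (∀ i j : Fin n, i < j →
          (∀ k, v k i j = 0) ∨ Tendsto (fun k => |v k i j|) atTop atTop) := by
  obtain ⟨φ, b, v, hf, hdich⟩ := hasFactorizationOn_of_isUpperUnip hu Finset.univ
  exact ⟨φ, hf.strictMono, b, v, hf.isUpperUnip_left, hf.isUpperUnip_right, hf.eq_mul,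
    hf.isBounded_left, fun i j hij => hdich (i, j) (Finset.mem_univ _) hij⟩
end
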